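/- Let A be a two-block SBM adjacency matrix with parameters (N, p). Then for all distinct indices i ≠ j lying in the same community, E[(A²)_{ij}] = N(1 − 2p + 2p²) − 2p² and E[((A²)_{ij})²] = N²(1 − 2p + 2p²)² + 2Np(1 − 4p + 6p² − 5p³) + 6p⁴ − 2p². -/

import Mathlib

/-!
Write `(A²)ᵢⱼ = ∑_{k ∉ {i, j}} Aᵢₖ Aₖⱼ` as a sum of indicators of the paths `i – k – j`. Such a
path has probability `p²` if `k` lies in the community of `i` and `j` (`N - 2` choices) and
`(1 - p)²` otherwise (`N` choices). Paths through different `k` use disjoint edges, so the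
indicators are pairwise independent, and since they are `{0, 1}`-valued the second moment of
their sum is `(∑ mₖ)² + ∑ (mₖ - mₖ²)`, where `mₖ` are their means.
-/

open MeasureTheory ProbabilityTheory Matrix

/-- `i` and `j` lie in the same community, where the communities of `Fin (2*N)` are
`{0, …, N-1}` and `{N, …, 2N-1}`. -/
def sameCom (N : ℕ) (i j : Fin (2 * N)) : Prop := ((i : ℕ) < N ↔ (j : ℕ) < N)

instance (N : ℕ) (i j : Fin (2 * N)) : Decidable (sameCom N i j) := by
  unfold sameCom; infer_instance

/-- The Bernoulli distribution on `ℝ` with success probability `q`: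
mass `q` at `1` and mass `1 - q` at `0`. -/
noncomputable def bernoulliReal (q : ℝ) : Measure ℝ :=
  ENNReal.ofReal q • Measure.dirac (1 : ℝ) + ENNReal.ofReal (1 - q) • Measure.dirac (0 : ℝ)

/-- `A` is a two-block SBM adjacency matrix with parameters `(N, p)` under the measure `μ`. -/
structure IsSBM {Ω : Type*} [MeasurableSpace Ω] (μ : Measure Ω) (N : ℕ) (p : ℝ)
    (A : Ω → Matrix (Fin (2 * N)) (Fin (2 * N)) ℝ) : Prop where
  isProb : IsProbabilityMeasure μ
  symm : ∀ ω, (A ω)ᵀ = A ω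
  diag : ∀ ω i, A ω i i = 0
  vals : ∀ ω i j, A ω i j = 0 ∨ A ω i j = 1
  meas : ∀ i j, Measurable fun ω => A ω i j
  indep : iIndepFun
    (fun (e : {e : Fin (2 * N) × Fin (2 * N) // e.1 < e.2}) ω => A ω e.1.1 e.1.2) μ
  bern : ∀ i j, i < j →
    μ.map (fun ω => A ω i j) = bernoulliReal (if sameCom N i j then p else 1 - p)

open Finset

lemma integral_id_bernoulliReal {q : ℝ} (hq : 0 ≤ q) : ∫ x, x ∂bernoulliReal q = q := by
  rw [bernoulliReal, integral_add_measure
    ((integrable_dirac (by simp)).smul_measure ENNReal.ofReal_ne_top)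
    ((integrable_dirac (by simp)).smul_measure ENNReal.ofReal_ne_top), integral_smul_measure,
    integral_smul_measure, integral_dirac, integral_dirac, ENNReal.toReal_ofReal hq]
  simp

lemma mul_eq_zero_or_one {M : Type*} [MulZeroOneClass M] {x y : M} (hx : x = 0 ∨ x = 1)
    (hy : y = 0 ∨ y = 1) : x * y = 0 ∨ x * y = 1 := by
  rcases hx with rfl | rfl <;> simp [hy]

section ZeroOneValued

variable {ι Ω : Type*} [MeasurableSpace Ω] {μ : Measure Ω} [IsFiniteMeasure μ]

lemma integrable_of_eq_zero_or_one {f : Ω → ℝ} (hf : AEStronglyMeasurable f μ)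
    (hval : ∀ ω, f ω = 0 ∨ f ω = 1) : Integrable f μ :=
  .of_bound hf 1 <| .of_forall fun ω => by rcases hval ω with h | h <;> simp [h]

lemma integral_sum_sq_of_uncorrelated (s : Finset ι) (X : ι → Ω → ℝ)
    (hmeas : ∀ k ∈ s, AEStronglyMeasurable (X k) μ)
    (hval : ∀ k ∈ s, ∀ ω, X k ω = 0 ∨ X k ω = 1)
    (hunc : ∀ k ∈ s, ∀ l ∈ s, k ≠ l →
      ∫ ω, X k ω * X l ω ∂μ = (∫ ω, X k ω ∂μ) * ∫ ω, X l ω ∂μ) :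
    ∫ ω, (∑ k ∈ s, X k ω) ^ 2 ∂μ
      = (∑ k ∈ s, ∫ ω, X k ω ∂μ) ^ 2 + ∑ k ∈ s, ((∫ ω, X k ω ∂μ) - (∫ ω, X k ω ∂μ) ^ 2) := by
  classical
  set m := fun k => ∫ ω, X k ω ∂μ
  have hint : ∀ k ∈ s, ∀ l ∈ s, Integrable (fun ω => X k ω * X l ω) μ := fun k hk l hl =>
    integrable_of_eq_zero_or_one ((hmeas k hk).mul (hmeas l hl))
      fun ω => mul_eq_zero_or_one (hval k hk ω) (hval l hl ω)
  have hpair : ∀ k ∈ s, ∀ l ∈ s,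
      ∫ ω, X k ω * X l ω ∂μ = m k * m l + if k = l then m k - m k ^ 2 else 0 := by
    intro k hk l hl
    split_ifs with hkl
    · subst hkl
      have hidem : ∀ ω, X k ω * X k ω = X k ω := fun ω => by
        rcases hval k hk ω with h | h <;> simp [h]
      simp only [hidem]
      ring
    · rw [hunc k hk l hl hkl, add_zero]
  calc ∫ ω, (∑ k ∈ s, X k ω) ^ 2 ∂μ
      = ∑ k ∈ s, ∑ l ∈ s, ∫ ω, X k ω * X l ω ∂μ := by
        simp_rw [sq, sum_mul_sum]
        rw [integral_finsetSum _ fun k hk => integrable_finsetSum _ fun l hl => hint k hk l hl]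
        exact sum_congr rfl fun k hk => integral_finsetSum _ fun l hl => hint k hk l hl
    _ = ∑ k ∈ s, ∑ l ∈ s, (m k * m l + if k = l then m k - m k ^ 2 else 0) :=
        sum_congr rfl fun k hk => sum_congr rfl fun l hl => hpair k hk l hl
    _ = (∑ k ∈ s, m k) ^ 2 + ∑ k ∈ s, (m k - m k ^ 2) := by
        simp_rw [sum_add_distrib, sum_ite_eq, ← mul_sum, ← sum_mul, sq]
        simp

end ZeroOneValued

lemma sameCom_refl (N : ℕ) (i : Fin (2 * N)) : sameCom N i i := Iff.rfl

lemma sameCom_comm {N : ℕ} {i j : Fin (2 * N)} : sameCom N i j ↔ sameCom N j i := Iff.comm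

lemma sameCom.trans {N : ℕ} {i j k : Fin (2 * N)} (hij : sameCom N i j) (hjk : sameCom N j k) :
    sameCom N i k := Iff.trans hij hjk

lemma card_filter_sameCom (N : ℕ) (i : Fin (2 * N)) : #{k | sameCom N i k} = N := by
  have hlt : #{k : Fin (2 * N) | (k : ℕ) < N} = N := by
    rw [Fin.card_filter_val_lt]; omega
  by_cases hi : (i : ℕ) < N
  · simpa [sameCom, hi] using hlt
  · have := card_filter_add_card_filter_not (s := univ) fun k : Fin (2 * N) => (k : ℕ) < N
    simp only [sameCom, hi, false_iff]
    simp only [card_univ, Fintype.card_fin, hlt] at this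
    omega

lemma sum_ite_sameCom (N : ℕ) (i : Fin (2 * N)) (a b : ℝ) :
    ∑ k, (if sameCom N i k then a else b) = N * a + N * b := by
  have hnot : #{k | ¬sameCom N i k} = N := by
    have := card_filter_add_card_filter_not (s := univ) (sameCom N i)
    simp only [card_univ, Fintype.card_fin, card_filter_sameCom] at this
    omega
  rw [sum_ite, sum_const, sum_const, card_filter_sameCom, hnot, nsmul_eq_mul, nsmul_eq_mul]

lemma sum_compl_pair_ite_sameCom {N : ℕ} {i j : Fin (2 * N)} (hij : i ≠ j) (hcom : sameCom N i j)
    (a b : ℝ) : ∑ k ∈ {i, j}ᶜ, (if sameCom N i k then a else b) = N * a + N * b - 2 * a := by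
  have := sum_compl_add_sum {i, j} fun k => if sameCom N i k then a else b
  rw [sum_pair hij, sum_ite_sameCom, if_pos (sameCom_refl N i), if_pos hcom] at this
  linarith

/-- The unordered pair `{a, b}` of distinct elements, as an index of the family `IsSBM.indep`. -/
def sortedPair {α : Type*} [LinearOrder α] {a b : α} (h : a ≠ b) : {e : α × α // e.1 < e.2} :=
  if hab : a < b then ⟨(a, b), hab⟩ else ⟨(b, a), (not_lt.mp hab).lt_of_ne h.symm⟩

lemma sym2_mk_sortedPair {α : Type*} [LinearOrder α] {a b : α} (h : a ≠ b) :
    s((sortedPair h).1.1, (sortedPair h).1.2) = s(a, b) := by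
  unfold sortedPair
  split_ifs
  · rfl
  · exact Sym2.eq_swap

lemma sortedPair_ne {α : Type*} [LinearOrder α] {a b c d : α} (hab : a ≠ b) (hcd : c ≠ d)
    (hne : s(a, b) ≠ s(c, d)) : sortedPair hab ≠ sortedPair hcd := fun he =>
  hne (by rw [← sym2_mk_sortedPair hab, ← sym2_mk_sortedPair hcd, he])

namespace IsSBM

variable {Ω : Type*} [MeasurableSpace Ω] {μ : Measure Ω} {N : ℕ} {p : ℝ}
  {A : Ω → Matrix (Fin (2 * N)) (Fin (2 * N)) ℝ}

lemma entry_comm (hA : IsSBM μ N p A) (ω : Ω) (a b : Fin (2 * N)) : A ω a b = A ω b a := by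
  simpa using congrFun₂ (hA.symm ω) b a

lemma entry_eq_edge (hA : IsSBM μ N p A) {a b : Fin (2 * N)} (h : a ≠ b) :
    (fun ω => A ω a b) = fun ω => A ω (sortedPair h).1.1 (sortedPair h).1.2 := by
  ext ω
  unfold sortedPair
  split_ifs
  · rfl
  · exact hA.entry_comm ω a b

lemma integral_entry (hA : IsSBM μ N p A) (hp0 : 0 ≤ p) (hp1 : p ≤ 1) {a b : Fin (2 * N)}
    (h : a ≠ b) : ∫ ω, A ω a b ∂μ = if sameCom N a b then p else 1 - p := by
  wlog hab : a < b generalizing a b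
  · rw [integral_congr_ae (.of_forall fun ω => hA.entry_comm ω a b),
      this h.symm (h.symm.lt_of_le (not_lt.mp hab))]
    simp only [sameCom_comm]
  rw [← integral_map (f := fun x : ℝ => x) (hA.meas a b).aemeasurable aestronglyMeasurable_id,
    hA.bern a b hab]
  split_ifs
  · exact integral_id_bernoulliReal hp0
  · exact integral_id_bernoulliReal (by linarith)

lemma indepFun_entry_entry (hA : IsSBM μ N p A) {a b c d : Fin (2 * N)} (hab : a ≠ b)
    (hcd : c ≠ d) (hne : s(a, b) ≠ s(c, d)) :
    IndepFun (fun ω => A ω a b) (fun ω => A ω c d) μ := by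
  rw [hA.entry_eq_edge hab, hA.entry_eq_edge hcd]
  exact hA.indep.indepFun (sortedPair_ne hab hcd hne)

lemma sq_apply_eq_sum_compl_pair (hA : IsSBM μ N p A) (ω : Ω) {i j : Fin (2 * N)} (hij : i ≠ j) :
    (A ω ^ 2) i j = ∑ k ∈ {i, j}ᶜ, A ω i k * A ω k j := by
  rw [sq, Matrix.mul_apply, ← sum_compl_add_sum {i, j}, sum_pair hij, hA.diag, hA.diag]
  simp

lemma integral_entry_mul_entry (hA : IsSBM μ N p A) (hp0 : 0 ≤ p) (hp1 : p ≤ 1)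
    {i j k : Fin (2 * N)} (hij : i ≠ j) (hik : i ≠ k) (hkj : k ≠ j) :
    ∫ ω, A ω i k * A ω k j ∂μ
      = (if sameCom N i k then p else 1 - p) * (if sameCom N k j then p else 1 - p) := by
  have hind := hA.indepFun_entry_entry hik hkj (by simp [hij, hik])
  rw [← hA.integral_entry hp0 hp1 hik, ← hA.integral_entry hp0 hp1 hkj]
  exact hind.integral_mul_eq_mul_integral (hA.meas i k).aestronglyMeasurable
    (hA.meas k j).aestronglyMeasurable

lemma indepFun_entry_mul_entry (hA : IsSBM μ N p A) {i j k l : Fin (2 * N)} (hik : i ≠ k)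
    (hkj : k ≠ j) (hil : i ≠ l) (hlj : l ≠ j) (hkl : k ≠ l) :
    IndepFun (fun ω => A ω i k * A ω k j) (fun ω => A ω i l * A ω l j) μ := by
  have h := hA.indep.indepFun_mul_mul (fun e => hA.meas _ _)
    (sortedPair hik) (sortedPair hkj) (sortedPair hil) (sortedPair hlj)
    (sortedPair_ne _ _ (by grind [Sym2.eq_iff]))
    (sortedPair_ne _ _ (by grind [Sym2.eq_iff]))
    (sortedPair_ne _ _ (by grind [Sym2.eq_iff]))
    (sortedPair_ne _ _ (by grind [Sym2.eq_iff]))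
  simpa only [Pi.mul_def, ← hA.entry_eq_edge] using h

lemma integral_entry_mul_entry_of_sameCom (hA : IsSBM μ N p A) (hp0 : 0 ≤ p) (hp1 : p ≤ 1)
    {i j k : Fin (2 * N)} (hij : i ≠ j) (hcom : sameCom N i j) (hik : i ≠ k) (hkj : k ≠ j) :
    ∫ ω, A ω i k * A ω k j ∂μ = if sameCom N i k then p ^ 2 else (1 - p) ^ 2 := by
  rw [hA.integral_entry_mul_entry hp0 hp1 hij hik hkj]
  by_cases hs : sameCom N i k
  · rw [if_pos hs, if_pos (sameCom_comm.mp hs |>.trans hcom), if_pos hs, sq]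
  · rw [if_neg hs, if_neg fun h => hs (hcom.trans (sameCom_comm.mp h)), if_neg hs, sq]

end IsSBM

theorem stmt10_general {Ω : Type*} [MeasurableSpace Ω] (μ : Measure Ω) (N : ℕ)
    (p : ℝ) (hp : 1 / 2 < p) (hp1 : p ≤ 1)
    (A : Ω → Matrix (Fin (2 * N)) (Fin (2 * N)) ℝ) (hA : IsSBM μ N p A)
    (i j : Fin (2 * N)) (hij : i ≠ j) (hcom : sameCom N i j) :
    (∫ ω, ((A ω) ^ 2) i j ∂μ) = (N : ℝ) * (1 - 2 * p + 2 * p ^ 2) - 2 * p ^ 2 ∧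
    (∫ ω, (((A ω) ^ 2) i j) ^ 2 ∂μ) =
      (N : ℝ) ^ 2 * (1 - 2 * p + 2 * p ^ 2) ^ 2
        + 2 * N * p * (1 - 4 * p + 6 * p ^ 2 - 5 * p ^ 3) + 6 * p ^ 4 - 2 * p ^ 2 := by
  have := hA.isProb
  have hp0 : 0 ≤ p := by linarith
  have hmem : ∀ k ∈ ({i, j}ᶜ : Finset _), i ≠ k ∧ k ≠ j := fun k hk => by
    simp only [mem_compl, mem_insert, mem_singleton, not_or] at hk
    exact ⟨Ne.symm hk.1, hk.2⟩
  have hmean : ∀ k ∈ ({i, j}ᶜ : Finset _), ∫ ω, A ω i k * A ω k j ∂μ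
      = if sameCom N i k then p ^ 2 else (1 - p) ^ 2 := fun k hk =>
    hA.integral_entry_mul_entry_of_sameCom hp0 hp1 hij hcom (hmem k hk).1 (hmem k hk).2
  have hmeas : ∀ k, Measurable fun ω => A ω i k * A ω k j := fun k =>
    (hA.meas i k).mul (hA.meas k j)
  have hval : ∀ k ω, A ω i k * A ω k j = 0 ∨ A ω i k * A ω k j = 1 := fun k ω =>
    mul_eq_zero_or_one (hA.vals ω i k) (hA.vals ω k j)
  have hvar : ∀ k ∈ ({i, j}ᶜ : Finset _),
      (∫ ω, A ω i k * A ω k j ∂μ) - (∫ ω, A ω i k * A ω k j ∂μ) ^ 2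
        = if sameCom N i k then p ^ 2 - (p ^ 2) ^ 2 else (1 - p) ^ 2 - ((1 - p) ^ 2) ^ 2 :=
    fun k hk => by rw [hmean k hk]; split_ifs <;> rfl
  simp_rw [hA.sq_apply_eq_sum_compl_pair _ hij]
  constructor
  · rw [integral_finsetSum _ fun k _ =>
      integrable_of_eq_zero_or_one (hmeas k).aestronglyMeasurable (hval k),
      sum_congr rfl hmean, sum_compl_pair_ite_sameCom hij hcom]
    ring
  · rw [integral_sum_sq_of_uncorrelated _ _ (fun k _ => (hmeas k).aestronglyMeasurable)
      (fun k _ => hval k) fun k hk l hl hkl => ?_, sum_congr rfl hmean, sum_congr rfl hvar,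
      sum_compl_pair_ite_sameCom hij hcom, sum_compl_pair_ite_sameCom hij hcom]
    · ring
    exact (hA.indepFun_entry_mul_entry (hmem k hk).1 (hmem k hk).2 (hmem l hl).1 (hmem l hl).2
      hkl).integral_mul_eq_mul_integral (hmeas k).aestronglyMeasurable
      (hmeas l).aestronglyMeasurable

theorem stmt10 {Ω : Type*} [MeasurableSpace Ω] (μ : Measure Ω) (N : ℕ) (hN : 1 ≤ N)
    (p : ℝ) (hp : 1 / 2 < p) (hp1 : p ≤ 1)
    (A : Ω → Matrix (Fin (2 * N)) (Fin (2 * N)) ℝ) (hA : IsSBM μ N p A)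
    (i j : Fin (2 * N)) (hij : i ≠ j) (hcom : sameCom N i j) :
    (∫ ω, ((A ω) ^ 2) i j ∂μ) = (N : ℝ) * (1 - 2 * p + 2 * p ^ 2) - 2 * p ^ 2 ∧
    (∫ ω, (((A ω) ^ 2) i j) ^ 2 ∂μ) =
      (N : ℝ) ^ 2 * (1 - 2 * p + 2 * p ^ 2) ^ 2
        + 2 * N * p * (1 - 4 * p + 6 * p ^ 2 - 5 * p ^ 3) + 6 * p ^ 4 - 2 * p ^ 2 :=
  stmt10_general μ N p hp hp1 A hA i j hij hcom
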